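/- The LZ77 factorization of the k-th period-doubling sequence S_k is (S_0, Ŝ_0, Ŝ_1, …, Ŝ_{k-1}); in particular, the number of LZ77 phrases of S_k is k+1. -/

import Mathlib

/-!
Since `φ(b) = φ(a)` with its last letter flipped, `φ(ŵ) = (φ(w))^` for every nonempty word `w`,
and induction on `S_{k+1} = φ(S_k)` gives `S_{k+1} = S_k Ŝ_k`. Hence the proposed phrases
concatenate to `S_k`, and the phrase `Ŝ_j` starts right after the prefix `S_j`. It is a valid
LZ77 phrase there: all of it but its last letter is a prefix of `S_j`, while `Ŝ_j` itself is a
word of length `|S_j|` different from `S_j`, so it cannot occur in `S_j`.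
-/

/-- The morphism φ: a ↦ ab, b ↦ aa, with `false = a`, `true = b`. -/
def pdPhi (c : Bool) : List Bool := if c then [false, false] else [false, true]

/-- The k-th period-doubling sequence. -/
def pd : ℕ → List Bool
  | 0 => [false]
  | k + 1 => (pd k).flatMap pdPhi

/-- `hat w` : `w` with its last character flipped. -/
def hat (w : List Bool) : List Bool := w.dropLast ++ (w.getLast?.map Bool.not).toList

/-- `ps` is the (greedy, non-overlapping) LZ77 factorization of `w`:
each phrase `p` with preceding text `pre` is such that `p.dropLast` is the longest
prefix of the remaining suffix occurring as a substring of `pre`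
(the last phrase may instead be a suffix of `w` occurring in the preceding text). -/
def IsLZ77Fact (w : List Bool) (ps : List (List Bool)) : Prop :=
  ps.flatten = w ∧ (∀ p ∈ ps, p ≠ []) ∧
  ∀ i (h : i < ps.length),
    (ps.get ⟨i, h⟩).dropLast <:+: (ps.take i).flatten ∧
    ((ps.take i).flatten ++ ps.get ⟨i, h⟩ = w ∨
      ¬ (ps.get ⟨i, h⟩ <:+: (ps.take i).flatten))

/-- `qs` is the (greedy) LZ-End factorization of `w`: each phrase `q` is such that
`q.dropLast` is the longest prefix of the remaining suffix occurring as a suffix of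
`q_1 ⋯ q_j` for some earlier phrase boundary `j`
(the last phrase may instead be such a suffix in full). -/
def IsLZEndFact (w : List Bool) (qs : List (List Bool)) : Prop :=
  qs.flatten = w ∧ (∀ q ∈ qs, q ≠ []) ∧
  ∀ i (h : i < qs.length),
    (∃ t ≤ i, (qs.get ⟨i, h⟩).dropLast <:+ (qs.take t).flatten) ∧
    ((qs.take i).flatten ++ qs.get ⟨i, h⟩ = w ∨
      ¬ ∃ t ≤ i, qs.get ⟨i, h⟩ <:+ (qs.take t).flatten)

@[simp]
lemma hat_concat (w : List Bool) (c : Bool) : hat (w ++ [c]) = w ++ [!c] := by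
  simp [hat]

@[simp]
lemma hat_nil : hat [] = [] := rfl

@[simp]
lemma length_hat (w : List Bool) : (hat w).length = w.length := by
  induction w using List.reverseRecOn <;> simp

@[simp]
lemma dropLast_hat (w : List Bool) : (hat w).dropLast = w.dropLast := by
  induction w using List.reverseRecOn <;> simp

lemma hat_ne_self {w : List Bool} (hw : w ≠ []) : hat w ≠ w := by
  induction w using List.reverseRecOn with
  | nil => exact absurd rfl hw
  | append_singleton w c => simp

lemma hat_ne_nil {w : List Bool} (hw : w ≠ []) : hat w ≠ [] := by
  rw [← List.length_pos_iff, length_hat]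
  exact List.length_pos_iff.mpr hw

lemma hat_append {u w : List Bool} (hw : w ≠ []) : hat (u ++ w) = u ++ hat w := by
  induction w using List.reverseRecOn with
  | nil => exact absurd rfl hw
  | append_singleton w c => simp [← List.append_assoc]

lemma hat_pdPhi (c : Bool) : hat (pdPhi c) = pdPhi (!c) := by
  cases c <;> rfl

lemma flatMap_pdPhi_hat {w : List Bool} (hw : w ≠ []) :
    (hat w).flatMap pdPhi = hat (w.flatMap pdPhi) := by
  induction w using List.reverseRecOn with
  | nil => exact absurd rfl hw
  | append_singleton w c =>
    have : pdPhi c ≠ [] := by cases c <;> simp [pdPhi]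
    simp [hat_append this, hat_pdPhi]

lemma length_flatMap_pdPhi (w : List Bool) : (w.flatMap pdPhi).length = 2 * w.length := by
  induction w with
  | nil => rfl
  | cons c w ih => cases c <;> simp [pdPhi, ih] <;> ring

lemma length_pd (k : ℕ) : (pd k).length = 2 ^ k := by
  induction k with
  | zero => rfl
  | succ k ih => rw [pd, length_flatMap_pdPhi, ih, pow_succ, mul_comm]

lemma pd_ne_nil (k : ℕ) : pd k ≠ [] := by
  simp [← List.length_pos_iff, length_pd]

lemma pd_succ (k : ℕ) : pd (k + 1) = pd k ++ hat (pd k) := by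
  induction k with
  | zero => rfl
  | succ k ih =>
    calc pd (k + 2) = (pd k ++ hat (pd k)).flatMap pdPhi := by rw [← ih]; rfl
      _ = pd (k + 1) ++ hat (pd (k + 1)) := by
        rw [List.flatMap_append, flatMap_pdPhi_hat (pd_ne_nil k)]; rfl

def pdPhrases (k : ℕ) : List (List Bool) := pd 0 :: (List.range k).map (fun i => hat (pd i))

@[simp]
lemma length_pdPhrases (k : ℕ) : (pdPhrases k).length = k + 1 := by
  simp [pdPhrases]

lemma flatten_pdPhrases (k : ℕ) : (pdPhrases k).flatten = pd k := by
  induction k with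
  | zero => rfl
  | succ k ih =>
    simp only [pdPhrases, List.flatten_cons, List.range_succ, List.map_append,
      List.flatten_append] at ih ⊢
    simp [← List.append_assoc, ih, pd_succ]

lemma take_succ_pdPhrases {j k : ℕ} (hjk : j ≤ k) :
    (pdPhrases k).take (j + 1) = pdPhrases j := by
  simp [pdPhrases, ← List.map_take, List.take_range, min_eq_left hjk]

lemma getElem_succ_pdPhrases {j k : ℕ} (h : j + 1 < (pdPhrases k).length) :
    (pdPhrases k)[j + 1] = hat (pd j) := by
  simp [pdPhrases]

lemma dropLast_hat_infix (w : List Bool) : (hat w).dropLast <:+: w := by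
  rw [dropLast_hat]
  exact (List.dropLast_prefix w).isInfix

lemma not_hat_infix {w : List Bool} (hw : w ≠ []) : ¬ hat w <:+: w :=
  fun h => hat_ne_self hw (h.sublist.eq_of_length (length_hat w))

/-- The LZ77 factorization of `S_k` is `(S_0, Ŝ_0, Ŝ_1, …, Ŝ_{k-1})`,
which has `k + 1` phrases. -/
theorem pd_lz77 (k : ℕ) :
    IsLZ77Fact (pd k) (pd 0 :: (List.range k).map (fun i => hat (pd i))) ∧
    (pd 0 :: (List.range k).map (fun i => hat (pd i))).length = k + 1 := by
  change IsLZ77Fact (pd k) (pdPhrases k) ∧ (pdPhrases k).length = k + 1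
  refine ⟨⟨flatten_pdPhrases k, ?_, ?_⟩, length_pdPhrases k⟩
  · simp only [pdPhrases, List.mem_cons, List.mem_map]
    rintro p (rfl | ⟨i, -, rfl⟩)
    · exact pd_ne_nil 0
    · exact hat_ne_nil (pd_ne_nil i)
  · rintro (_ | j) h <;> simp only [List.get_eq_getElem]
    · exact ⟨by simp [pdPhrases, pd], Or.inr (by simp [pdPhrases, pd])⟩
    · rw [take_succ_pdPhrases (by simpa using h : j < k).le, flatten_pdPhrases,
        getElem_succ_pdPhrases]
      exact ⟨dropLast_hat_infix (pd j), Or.inr (not_hat_infix (pd_ne_nil j))⟩
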